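/- arXiv:2002.12849 — 7 statements merged into one kernel-verified Lean document; each statement's English description precedes it below -/
import Mathlib

section
/- Let N ≥ 1, let α ∈ {2,3}, and let a ∈ ℤ, b : {1,…,N} → ℤ satisfy a² − Σᵢ bᵢ² = −α and −3a + Σᵢ bᵢ = α − 2. If a > 3, then the number of indices i with bᵢ ≠ 0 is at least α + 7. (Lemma 3.5 of the paper.) -/
/-!
Let `k` be the number of nonzero `bᵢ`, so that `Σ bᵢ = 3a + α − 2` and `Σ bᵢ² = a² + α`.
For `a ≥ 5` Cauchy–Schwarz `(Σ bᵢ)² ≤ k Σ bᵢ²` already forces `k ≥ α + 7`. For `a = 4`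
one uses instead that `(b − 1)(b − 2) ≥ 0` for every integer `b`, i.e. `3b ≤ b² + 2`;
summed over the nonzero `bᵢ` this gives `3 Σ bᵢ ≤ Σ bᵢ² + 2k`.
-/

open Finset

theorem Int.three_mul_le_sq_add_two (x : ℤ) : 3 * x ≤ x ^ 2 + 2 := by
  rcases le_or_gt x 1 with hx | hx
  · nlinarith
  · nlinarith

section Support

variable {ι : Type*} [Fintype ι] (f : ι → ℤ)

theorem sum_sq_filter_ne_zero :
    ∑ i ∈ univ.filter (fun i => f i ≠ 0), f i ^ 2 = ∑ i, f i ^ 2 :=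
  sum_filter_of_ne fun _ _ h hf => h (by simp [hf])

theorem three_mul_sum_le_sum_sq_add_two_mul_card_ne_zero :
    3 * ∑ i, f i ≤ ∑ i, f i ^ 2 + 2 * ((univ.filter (fun i => f i ≠ 0)).card : ℤ) := by
  rw [← sum_filter_ne_zero, ← sum_sq_filter_ne_zero, card_eq_sum_ones, Nat.cast_sum,
    mul_sum, mul_sum, ← sum_add_distrib]
  exact sum_le_sum fun i _ => by simpa using Int.three_mul_le_sq_add_two (f i)

theorem sq_sum_le_card_ne_zero_mul_sum_sq :
    (∑ i, f i) ^ 2 ≤ ((univ.filter (fun i => f i ≠ 0)).card : ℤ) * ∑ i, f i ^ 2 := by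
  rw [← sum_filter_ne_zero, ← sum_sq_filter_ne_zero]
  exact sq_sum_le_card_mul_sum_sq

end Support

theorem stmt2_general (N : ℕ) (α a : ℤ) (hα : α = 2 ∨ α = 3)
    (b : Fin N → ℤ)
    (h1 : a ^ 2 - (∑ i, (b i) ^ 2) = -α)
    (h2 : -3 * a + (∑ i, b i) = α - 2)
    (ha : 3 < a) :
    α + 7 ≤ ((Finset.univ.filter (fun i => b i ≠ 0)).card : ℤ) := by
  set k : ℤ := ((univ.filter (fun i => b i ≠ 0)).card : ℤ)
  have hsq : ∑ i, b i ^ 2 = a ^ 2 + α := by omega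
  have hsum : ∑ i, b i = 3 * a + α - 2 := by omega
  have hlin := three_mul_sum_le_sum_sq_add_two_mul_card_ne_zero b
  have hcs := sq_sum_le_card_ne_zero_mul_sum_sq b
  rw [hsq, hsum] at hlin hcs
  by_contra! hk
  rcases eq_or_lt_of_le (show 4 ≤ a by omega) with rfl | ha5
  · omega
  · rcases hα with rfl | rfl <;> nlinarith

/-- Lemma 3.5: if the class `A = aH − Σᵢ bᵢEᵢ` satisfies `A·A = −α` and
`K·A = α − 2` (`α = 2, 3`) and `a > 3`, then at least `α + 7` of the
coefficients `bᵢ` are nonzero. -/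
theorem stmt2 (N : ℕ) (hN : 1 ≤ N) (α a : ℤ) (hα : α = 2 ∨ α = 3)
    (b : Fin N → ℤ)
    (h1 : a ^ 2 - (∑ i, (b i) ^ 2) = -α)
    (h2 : -3 * a + (∑ i, b i) = α - 2)
    (ha : 3 < a) :
    α + 7 ≤ ((Finset.univ.filter (fun i => b i ≠ 0)).card : ℤ) :=
  stmt2_general N α a hα b h1 h2 ha
end

section
/- Let N ≥ 1, let α ∈ {2,3}, and let a ∈ ℤ, b : {1,…,N} → ℤ satisfy a² − Σᵢ bᵢ² = −α, −3a + Σᵢ bᵢ = α − 2, and bᵢ ≥ 0 for all i. Let h, e₁, …, e_N be reduced area data, and assume a > 3 together with the area condition a·h − Σᵢ bᵢeᵢ < 3h − Σᵢ eᵢ. Then there is an index j and a set S of exactly 2a + α − 1 indices with j ∉ S such that b_j = a − 1, bᵢ = 1 for all i ∈ S, and bᵢ = 0 for all i ∉ S ∪ {j}; in particular 2a + α ≤ N, so a ≤ (N − α)/2. (This is Lemma 3.6 of the paper in its homological form: a symplectic (−α)-sphere A with ω(A) < −c₁(K)·[ω] must take the expression A = aH − (a−1)E_{j₁} − E_{j₂}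 − ⋯ − E_{j_{2a+α}}.) -/
/-!
With `A = aH − Σ bᵢEᵢ`, the two homological equations give `Σ bᵢ(bᵢ − 1) = (a − 1)(a − 2)`.
If some `b_j ≥ a − 1`, that single term already exhausts the sum, so `b_j = a − 1` and all other
`bᵢ` are `0` or `1`; the ones are then counted by `Σ bᵢ − b_j = 2a + α − 1`.

Otherwise every `bᵢ ≤ a − 2`. Cauchy–Schwarz over the coefficients `bᵢ ≥ 2` shows that the
excesses `cᵢ = max (bᵢ − 1) 0 ≤ a − 3` total at most `3(a − 3)`. As the `eᵢ` decrease, `Σ cᵢeᵢ`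
is then at most `(a − 3)(e₁ + e₂ + e₃) ≤ (a − 3)h`, while the area condition says exactly that
`Σ (bᵢ − 1)eᵢ > (a − 3)h`.
-/

open Finset

lemma Int.mul_sub_one_nonneg (x : ℤ) : 0 ≤ x * (x - 1) := by
  rcases le_or_gt x 0 with hx | hx
  · exact mul_nonneg_of_nonpos_of_nonpos hx (by omega)
  · exact mul_nonneg hx.le (by omega)

lemma natCast_card_filter_eq_one {ι : Type*} {s : Finset ι} {b : ι → ℤ}
    (hb : ∀ i ∈ s, b i = 0 ∨ b i = 1) : (#{i ∈ s | b i = 1} : ℤ) = ∑ i ∈ s, b i := by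
  rw [natCast_card_filter]
  refine sum_congr rfl fun i hi => ?_
  rcases hb i hi with h | h <;> simp [h]

section FiniteSums

variable {ι : Type*} [Fintype ι]

lemma eq_and_zero_or_one_of_sum_mul_sub_one_eq [DecidableEq ι] {a : ℤ} {b : ι → ℤ}
    (hsq : ∑ i, b i * (b i - 1) = (a - 1) * (a - 2)) (ha : 1 < a) {j : ι} (hj : a - 1 ≤ b j) :
    b j = a - 1 ∧ ∀ i ≠ j, b i = 0 ∨ b i = 1 := by
  have hj_le : b j * (b j - 1) ≤ (a - 1) * (a - 2) :=
    hsq ▸ single_le_sum (fun i _ => (b i).mul_sub_one_nonneg) (mem_univ j)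
  -- `b j ≥ a` would force `b j (b j - 1) ≥ a (a - 1) > (a - 1)(a - 2)`.
  have hbj : b j = a - 1 := by nlinarith
  refine ⟨hbj, fun i hij => ?_⟩
  have hrest : ∑ i ∈ univ.erase j, b i * (b i - 1) = 0 := by
    rw [sum_erase_eq_sub (mem_univ j), hsq, hbj]; ring
  rcases mul_eq_zero.1 <| (sum_eq_zero_iff_of_nonneg fun i _ => (b i).mul_sub_one_nonneg).1
    hrest i (mem_erase.2 ⟨hij, mem_univ i⟩) with h | h
  · exact Or.inl h
  · exact Or.inr (by omega)

lemma exists_finset_of_sum_mul_sub_one_eq [DecidableEq ι] {a : ℤ} {b : ι → ℤ}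
    (hsq : ∑ i, b i * (b i - 1) = (a - 1) * (a - 2)) (ha : 1 < a) {j : ι} (hj : a - 1 ≤ b j) :
    ∃ S : Finset ι, j ∉ S ∧ (#S : ℤ) = ∑ i, b i - (a - 1) ∧ b j = a - 1 ∧
      (∀ i ∈ S, b i = 1) ∧ ∀ i ∉ S, i ≠ j → b i = 0 := by
  obtain ⟨hbj, h01⟩ := eq_and_zero_or_one_of_sum_mul_sub_one_eq hsq ha hj
  refine ⟨{i ∈ univ.erase j | b i = 1}, by simp, ?_, hbj, fun i hi => (mem_filter.1 hi).2,
    fun i hiS hij => (h01 i hij).resolve_right fun hi => hiS (by simp [hij, hi])⟩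
  rw [natCast_card_filter_eq_one fun i hi => h01 i (ne_of_mem_erase hi),
    sum_erase_eq_sub (mem_univ j), hbj]

lemma sum_max_sub_one_le {a : ℤ} {b : ι → ℤ} (ha : 4 ≤ a) (hb : ∀ i, 0 ≤ b i)
    (hsum : ∑ i, b i ≤ 3 * a + 1) (hsq : ∑ i, b i * (b i - 1) ≤ (a - 1) * (a - 2)) :
    ∑ i, max (b i - 1) 0 ≤ 3 * (a - 3) := by
  classical
  set T := univ.filter (fun i => 2 ≤ b i)
  set k : ℤ := (#T : ℤ)
  set S := ∑ i ∈ T, b i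
  have hmax : ∑ i, max (b i - 1) 0 = S - k := by
    rw [← sum_filter_add_sum_filter_not univ (fun i => 2 ≤ b i),
      sum_congr rfl fun i hi => max_eq_left (by linarith [(mem_filter.1 hi).2]),
      sum_eq_zero fun i hi => max_eq_right (by linarith [(mem_filter.1 hi).2]),
      sum_sub_distrib]
    simp [S, k, T]
  have hsqT : ∑ i ∈ T, b i ^ 2 ≤ (a - 1) * (a - 2) + S := by
    have : ∑ i ∈ T, b i * (b i - 1) ≤ (a - 1) * (a - 2) :=
      (sum_le_sum_of_subset_of_nonneg (subset_univ T) fun i _ _ => (b i).mul_sub_one_nonneg).trans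
        hsq
    have hsplit : ∑ i ∈ T, b i ^ 2 = ∑ i ∈ T, b i * (b i - 1) + S := by
      rw [← sum_add_distrib]; exact sum_congr rfl fun i _ => by ring
    linarith
  have hcs : S ^ 2 ≤ k * ∑ i ∈ T, b i ^ 2 := sq_sum_le_card_mul_sum_sq
  have htwo : 2 * k ≤ S := by
    simpa [mul_comm] using card_nsmul_le_sum T b 2 fun i hi => (mem_filter.1 hi).2
  have hST : S ≤ 3 * a + 1 :=
    (sum_le_sum_of_subset_of_nonneg (subset_univ T) fun i _ _ => hb i).trans hsum
  have hk : 0 ≤ k := by positivity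
  rw [hmax]
  -- `S - k ≥ 3a - 8` together with `S ≤ 3a + 1` leaves `k ≤ 9`, too few for Cauchy–Schwarz.
  nlinarith [sq_nonneg (S - 3 * k), sq_nonneg (S - 2 * k), mul_nonneg hk hk, sq_nonneg (a - 4),
    mul_le_mul_of_nonneg_left hST hk, mul_le_mul_of_nonneg_left hsqT hk]

lemma sum_mul_le_mul_sum_of_pivot (P : Finset ι) {c e : ι → ℝ} {M t : ℝ}
    (hc : ∀ i, 0 ≤ c i) (hcM : ∀ i, c i ≤ M) (hsum : ∑ i, c i ≤ #P * M) (ht : 0 ≤ t)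
    (hP : ∀ i ∈ P, t ≤ e i) (hPc : ∀ i ∉ P, e i ≤ t) :
    ∑ i, c i * e i ≤ M * ∑ i ∈ P, e i := by
  classical
  calc ∑ i, c i * e i = ∑ i, c i * (e i - t) + (∑ i, c i) * t := by
        rw [sum_mul, ← sum_add_distrib]; exact sum_congr rfl fun i _ => by ring
    _ ≤ ∑ i, (if i ∈ P then M * (e i - t) else 0) + #P * M * t := by
        gcongr with i
        split_ifs with hi
        · exact mul_le_mul_of_nonneg_right (hcM i) (sub_nonneg.2 (hP i hi))
        · exact mul_nonpos_of_nonneg_of_nonpos (hc i) (sub_nonpos.2 (hPc i hi))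
    _ = M * ∑ i ∈ P, e i := by
        rw [sum_ite_mem, univ_inter, ← mul_sum, sum_sub_distrib, sum_const, nsmul_eq_mul]; ring

end FiniteSums

lemma sum_sub_one_mul_le_of_le_sub_two {N : ℕ} (hN : 3 ≤ N) {a : ℤ} {b : Fin N → ℤ} {h : ℝ}
    {e : Fin N → ℝ} (ha : 4 ≤ a) (hb : ∀ i, 0 ≤ b i) (hub : ∀ i, b i ≤ a - 2)
    (hsum : ∑ i, b i ≤ 3 * a + 1) (hsq : ∑ i, b i * (b i - 1) ≤ (a - 1) * (a - 2))
    (he : ∀ i, 0 ≤ e i) (hmono : Antitone e)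
    (h3pt : ∀ i j k : Fin N, i ≠ j → i ≠ k → j ≠ k → 0 ≤ h - e i - e j - e k) :
    ∑ i, ((b i : ℝ) - 1) * e i ≤ (a - 3) * h := by
  let c i : ℝ := (max (b i - 1) 0 : ℤ)
  let i₀ : Fin N := ⟨0, by omega⟩
  let i₁ : Fin N := ⟨1, by omega⟩
  let i₂ : Fin N := ⟨2, by omega⟩
  have hP : ∑ i ∈ {i₀, i₁, i₂}, e i = e i₀ + e i₁ + e i₂ := by
    rw [sum_insert (by simp [i₀, i₁, i₂, Fin.ext_iff]), sum_pair (by simp [i₁, i₂, Fin.ext_iff]),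
      add_assoc]
  have hcsum : ∑ i, c i ≤ #{i₀, i₁, i₂} * ((a : ℝ) - 3) := by
    rw [card_insert_of_notMem (by simp [i₀, i₁, i₂, Fin.ext_iff]),
      card_pair (by simp [i₁, i₂, Fin.ext_iff])]
    have := Int.cast_le (R := ℝ) |>.2 (sum_max_sub_one_le ha hb hsum hsq)
    simp only [c]
    push_cast at this ⊢
    linarith
  have hc₀ : ∀ i, 0 ≤ c i := fun i => by simp only [c]; exact_mod_cast le_max_right _ _
  have hcM : ∀ i, c i ≤ a - 3 := fun i => by
    simp only [c]; exact_mod_cast max_le (by linarith [hub i]) (by omega)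
  calc ∑ i, ((b i : ℝ) - 1) * e i ≤ ∑ i, c i * e i := by
        gcongr with i
        · exact he i
        · simp only [c]; exact_mod_cast le_max_left _ _
    _ ≤ (a - 3) * ∑ i ∈ {i₀, i₁, i₂}, e i := by
        refine sum_mul_le_mul_sum_of_pivot _ hc₀ hcM hcsum (he i₂) (fun i hi => ?_)
          (fun i hi => hmono ?_)
        · simp only [mem_insert, mem_singleton] at hi
          rcases hi with rfl | rfl | rfl <;> exact hmono (by simp [Fin.le_def, i₀, i₁, i₂])
        · simp only [mem_insert, mem_singleton, not_or, Fin.ext_iff, i₀, i₁, i₂] at hi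
          simp only [Fin.le_def, i₂]
          omega
    _ ≤ (a - 3) * h := by
        have : e i₀ + e i₁ + e i₂ ≤ h := by
          linarith [h3pt i₀ i₁ i₂ (by simp [i₀, i₁, Fin.ext_iff]) (by simp [i₀, i₂, Fin.ext_iff])
            (by simp [i₁, i₂, Fin.ext_iff])]
        rw [hP]
        exact mul_le_mul_of_nonneg_left this (by exact_mod_cast (by omega : (0 : ℤ) ≤ a - 3))

theorem stmt3_general (N : ℕ) (α a : ℤ) (hα : α = 2 ∨ α = 3)
    (b : Fin N → ℤ)
    (h1 : a ^ 2 - (∑ i, (b i) ^ 2) = -α)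
    (h2 : -3 * a + (∑ i, b i) = α - 2)
    (hbpos : ∀ i, 0 ≤ b i)
    (h : ℝ) (e : Fin N → ℝ)
    (he : ∀ i, 0 < e i)
    (hmono : ∀ i j : Fin N, i ≤ j → e j ≤ e i)
    (h3pt : ∀ i j k : Fin N, i ≠ j → i ≠ k → j ≠ k → 0 ≤ h - e i - e j - e k)
    (ha : 3 < a)
    (harea : (a : ℝ) * h - (∑ i, (b i : ℝ) * e i) < 3 * h - ∑ i, e i) :
    (∃ (j : Fin N) (S : Finset (Fin N)), j ∉ S ∧ (S.card : ℤ) = 2 * a + α - 1 ∧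
      b j = a - 1 ∧ (∀ i ∈ S, b i = 1) ∧ (∀ i, i ∉ S → i ≠ j → b i = 0)) ∧
    2 * a + α ≤ (N : ℤ) := by
  have hα₂ : 2 ≤ α := by omega
  have hsum : ∑ i, b i = 3 * a + α - 2 := by linarith
  have hsq : ∑ i, b i * (b i - 1) = (a - 1) * (a - 2) := by
    simp only [mul_sub_one, sum_sub_distrib, ← sq]
    linarith
  by_cases hbig : ∃ j, a - 1 ≤ b j
  · obtain ⟨j, hj⟩ := hbig
    obtain ⟨S, hjS, hcard, hbj, hS₁, hS₀⟩ := exists_finset_of_sum_mul_sub_one_eq hsq (by omega) hj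
    have hSN : #S < N := by simpa using card_lt_univ_of_notMem hjS
    exact ⟨⟨j, S, hjS, by omega, hbj, hS₁, hS₀⟩, by omega⟩
  · have hub : ∀ i, b i ≤ a - 2 := fun i => by linarith [not_le.1 (not_exists.1 hbig i)]
    have hN : 3 ≤ N := by
      have := sum_le_card_nsmul univ b (a - 2) fun i _ => hub i
      simp only [card_univ, Fintype.card_fin, nsmul_eq_mul] at this
      by_contra! hN
      have : (N : ℤ) ≤ 2 := by exact_mod_cast Nat.le_of_lt_succ hN
      nlinarith [mul_le_mul_of_nonneg_right this (by omega : (0 : ℤ) ≤ a - 2)]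
    have hbound := sum_sub_one_mul_le_of_le_sub_two hN (by omega) hbpos hub (by omega) hsq.le
      (fun i => (he i).le) (fun i j => hmono i j) h3pt
    simp only [sub_one_mul, sum_sub_distrib] at hbound
    linarith

/-- Lemma 3.6 (homological form): let `A = aH − Σᵢ bᵢEᵢ` be the class of a symplectic
`(−α)`-sphere (`α = 2, 3`), with all `bᵢ ≥ 0` and `a > 3`, and suppose in reduced area
data `h, e₁, …, e_N` the area condition `ω(A) < −ω(K)` holds, i.e.
`a·h − Σᵢ bᵢeᵢ < 3h − Σᵢ eᵢ`. Then `A = aH − (a−1)E_{j} − Σ_{i ∈ S} Eᵢ` with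
`|S| = 2a + α − 1`; in particular `2a + α ≤ N`. -/
theorem stmt3 (N : ℕ) (hN : 1 ≤ N) (α a : ℤ) (hα : α = 2 ∨ α = 3)
    (b : Fin N → ℤ)
    (h1 : a ^ 2 - (∑ i, (b i) ^ 2) = -α)
    (h2 : -3 * a + (∑ i, b i) = α - 2)
    (hbpos : ∀ i, 0 ≤ b i)
    (h : ℝ) (e : Fin N → ℝ)
    (he : ∀ i, 0 < e i)
    (hmono : ∀ i j : Fin N, i ≤ j → e j ≤ e i)
    (h2pt : ∀ i j : Fin N, i ≠ j → 0 < h - e i - e j)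
    (h3pt : ∀ i j k : Fin N, i ≠ j → i ≠ k → j ≠ k → 0 ≤ h - e i - e j - e k)
    (ha : 3 < a)
    (harea : (a : ℝ) * h - (∑ i, (b i : ℝ) * e i) < 3 * h - ∑ i, e i) :
    (∃ (j : Fin N) (S : Finset (Fin N)), j ∉ S ∧ (S.card : ℤ) = 2 * a + α - 1 ∧
      b j = a - 1 ∧ (∀ i ∈ S, b i = 1) ∧ (∀ i, i ∉ S → i ≠ j → b i = 0)) ∧
    2 * a + α ≤ (N : ℤ) :=
  stmt3_general N α a hα b h1 h2 hbpos h e he hmono h3pt ha harea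
end

section
/- Let N ≥ 1 and let B = aH − Σᵢ bᵢEᵢ be a nonzero class in L_N satisfying B·B = 0 and K·B = 0 (equivalently a² = Σᵢ bᵢ² and 3a = Σᵢ bᵢ). If a ≥ 0, then a ≥ 3. Moreover, if a = 3, then every bᵢ ∈ {0,1} and exactly nine indices i satisfy bᵢ = 1; that is, B = 3H − E_{j₁} − ⋯ − E_{j₉} for some nine distinct indices j₁,…,j₉. (Lemma 4.2(2) of the paper.) -/
/-!
Since `x ≤ x²` for every integer, `3a = Σ bᵢ ≤ Σ bᵢ² = a²`, so `a = 0` or `a ≥ 3`; and `a = 0`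
forces every `bᵢ = 0`. When `a = 3` the inequality is an equality, so `bᵢ = bᵢ²` for each `i`,
i.e. `bᵢ ∈ {0, 1}`, and then `Σ bᵢ = 9` counts the indices with `bᵢ = 1`.
-/

open Finset

namespace Finset

variable {ι : Type*} (s : Finset ι) (b : ι → ℤ)

lemma sum_le_sum_sq : ∑ i ∈ s, b i ≤ ∑ i ∈ s, b i ^ 2 :=
  sum_le_sum fun i _ => Int.le_self_sq (b i)

lemma eq_zero_or_eq_one_of_sum_sq_eq_sum (h : ∑ i ∈ s, b i ^ 2 = ∑ i ∈ s, b i) :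
    ∀ i ∈ s, b i = 0 ∨ b i = 1 := by
  have hsq : ∀ i ∈ s, b i = b i ^ 2 :=
    (sum_eq_sum_iff_of_le fun i _ => Int.le_self_sq (b i)).1 h.symm
  exact fun i hi => eq_zero_or_one_of_sq_eq_self (hsq i hi).symm

lemma sum_eq_card_filter_eq_one (h01 : ∀ i ∈ s, b i = 0 ∨ b i = 1) :
    ∑ i ∈ s, b i = #(s.filter fun i => b i = 1) := by
  rw [natCast_card_filter]
  refine sum_congr rfl fun i hi => ?_
  rcases h01 i hi with h | h <;> simp [h]

end Finset

theorem stmt5_general (N : ℕ) (a : ℤ) (b : Fin N → ℤ)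
    (hne : a ≠ 0 ∨ ∃ i, b i ≠ 0)
    (h1 : a ^ 2 = ∑ i, (b i) ^ 2)
    (h2 : 3 * a = ∑ i, b i)
    (ha : 0 ≤ a) :
    3 ≤ a ∧
      (a = 3 → (∀ i, b i = 0 ∨ b i = 1) ∧
        (Finset.univ.filter (fun i => b i = 1)).card = 9) := by
  have hle : 3 * a ≤ a ^ 2 := h1 ▸ h2 ▸ sum_le_sum_sq univ b
  have hpos : 0 < a := by
    refine ha.lt_of_ne fun ha0 => ?_
    have hb : ∀ i, b i = 0 := fun i => pow_eq_zero_iff two_ne_zero |>.1 <|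
      (sum_eq_zero_iff_of_nonneg fun i _ => sq_nonneg (b i)).1 (by rw [← h1, ← ha0]; ring)
        i (mem_univ i)
    simp [hb, ← ha0] at hne
  refine ⟨by nlinarith, fun ha3 => ?_⟩
  subst ha3
  have h01 := eq_zero_or_eq_one_of_sum_sq_eq_sum univ b (by rw [← h1, ← h2]; norm_num)
  refine ⟨fun i => h01 i (mem_univ i), ?_⟩
  have h9 := sum_eq_card_filter_eq_one univ b h01
  omega

/-- Lemma 4.2(2): let `B = aH − Σᵢ bᵢEᵢ` be a nonzero class with `B·B = 0` and
`K·B = 0`, i.e. `a² = Σᵢ bᵢ²` and `3a = Σᵢ bᵢ`. If `a ≥ 0` then `a ≥ 3`, and if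
`a = 3` then every `bᵢ ∈ {0,1}` and exactly nine of the `bᵢ` equal `1`, i.e.
`B = 3H − E_{j₁} − ⋯ − E_{j₉}`. -/
theorem stmt5 (N : ℕ) (hN : 1 ≤ N) (a : ℤ) (b : Fin N → ℤ)
    (hne : a ≠ 0 ∨ ∃ i, b i ≠ 0)
    (h1 : a ^ 2 = ∑ i, (b i) ^ 2)
    (h2 : 3 * a = ∑ i, b i)
    (ha : 0 ≤ a) :
    3 ≤ a ∧
      (a = 3 → (∀ i, b i = 0 ∨ b i = 1) ∧
        (Finset.univ.filter (fun i => b i = 1)).card = 9) :=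
  stmt5_general N a b hne h1 h2 ha
end

section
/- In L₉ (with K = −3H + E₁ + ⋯ + E₉), there do not exist nine classes F₁, …, F₉ satisfying F_k·F_k = −2 and K·F_k = 0 for all k and F_j·F_k = 0 for all j ≠ k. (This is the homological part of Theorem 1.4 for N = 9: for CP² # 9CP²‾ even the homology classes of nine disjoint symplectic (−2)-spheres cannot exist.) -/
/-- A class `aH + Σᵢ vᵢEᵢ` of the lattice `L_N` is encoded by the pair `(a, v)`.
The intersection form is `(a, v)·(a', v') = a·a' − Σᵢ vᵢv'ᵢ`. -/
def interL {N : ℕ} (A B : ℤ × (Fin N → ℤ)) : ℤ :=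
  A.1 * B.1 - ∑ i, A.2 i * B.2 i

/-- The canonical class `K = −3H + E₁ + ⋯ + E_N` of `L_N`. -/
def KclassL (N : ℕ) : ℤ × (Fin N → ℤ) := (-3, fun _ => 1)

/-!
Over `ℚ`, the nine classes `Fₖ` are pairwise orthogonal with `Fₖ² ≠ 0`, hence linearly
independent. `K` is orthogonal to every `Fₖ` without being zero, so it is not in their span,
and since `K² = 9 − 9 = 0`, all ten vectors `K, F₁, …, F₉` lie in the hyperplane `K^⊥`, which
has dimension `10 − 1 = 9` because the form is not identically zero against `K`.
-/

open Module
open LinearMap (BilinForm)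

namespace LinearMap.BilinForm

variable {K V ι : Type*} [Field K] [AddCommGroup V] [Module K V] {B : BilinForm K V} {v : ι → V}

theorem notMem_span_of_iIsOrtho [Fintype ι] (hv : B.iIsOrtho v) (hvv : ∀ i, B (v i) (v i) ≠ 0)
    {x : V} (hx : x ≠ 0) (hxv : ∀ i, B x (v i) = 0) : x ∉ Submodule.span K (Set.range v) := by
  rw [Submodule.mem_span_range_iff_exists_fun]
  rintro ⟨c, rfl⟩
  have hc : ∀ j, c j = 0 := fun j => by
    have hj : c j * B (v j) (v j) = 0 := by
      rw [← hxv j, sum_left, Finset.sum_eq_single j]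
      · rw [smul_left]
      · intro i _ hij
        rw [smul_left, hv hij, mul_zero]
      · simp
    exact (mul_eq_zero.1 hj).resolve_right (hvv j)
  simp [hc] at hx

theorem card_add_two_le_finrank [Fintype ι] [FiniteDimensional K V] (hv : B.iIsOrtho v)
    (hvv : ∀ i, B (v i) (v i) ≠ 0) {x : V} (hx : B x ≠ 0) (hxx : B x x = 0)
    (hxv : ∀ i, B x (v i) = 0) : Fintype.card ι + 2 ≤ finrank K V := by
  have hx₀ : x ≠ 0 := fun h => hx (h ▸ map_zero B)
  set w : Option ι → V := fun o => Option.casesOn' o x v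
  have hw : LinearIndependent K w :=
    (linearIndependent_of_iIsOrtho hv hvv).option (notMem_span_of_iIsOrtho hv hvv hx₀ hxv)
  have hker : Submodule.span K (Set.range w) ≤ LinearMap.ker (B x) := by
    rw [Submodule.span_le, Set.range_subset_iff]
    rintro (_ | i)
    exacts [hxx, hxv i]
  calc Fintype.card ι + 2 = finrank K (Submodule.span K (Set.range w)) + 1 := by
        rw [finrank_span_eq_card hw, Fintype.card_option]
    _ ≤ finrank K (LinearMap.ker (B x)) + 1 := by gcongr; exact Submodule.finrank_mono hker
    _ = finrank K V := Module.Dual.finrank_ker_add_one_of_ne_zero hx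

end LinearMap.BilinForm

def interQ (N : ℕ) : BilinForm ℚ (ℚ × (Fin N → ℚ)) :=
  LinearMap.mk₂ ℚ (fun x y => x.1 * y.1 - ∑ i, x.2 i * y.2 i)
    (fun x x' y => by simp only [Prod.fst_add, Prod.snd_add, Pi.add_apply, add_mul,
      Finset.sum_add_distrib]; ring)
    (fun c x y => by simp only [Prod.smul_fst, Prod.smul_snd, Pi.smul_apply, smul_eq_mul,
      mul_assoc, ← Finset.mul_sum, mul_sub])
    (fun x y y' => by simp only [Prod.fst_add, Prod.snd_add, Pi.add_apply, mul_add,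
      Finset.sum_add_distrib]; ring)
    (fun c x y => by simp only [Prod.smul_fst, Prod.smul_snd, Pi.smul_apply, smul_eq_mul,
      mul_left_comm _ c, ← Finset.mul_sum, mul_sub])

def toQ {N : ℕ} (A : ℤ × (Fin N → ℤ)) : ℚ × (Fin N → ℚ) := (A.1, fun i => A.2 i)

@[simp]
theorem interQ_toQ {N : ℕ} (A B : ℤ × (Fin N → ℤ)) : interQ N (toQ A) (toQ B) = interL A B := by
  simp [interQ, toQ, interL]

theorem interQ_KclassL_ne_zero (N : ℕ) : interQ N (toQ (KclassL N)) ≠ 0 := fun h => by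
  simpa [interQ, toQ, KclassL] using LinearMap.congr_fun h (1, 0)

/-- Homological part of Theorem 1.4 for `N = 9`: in `L₉` there do not exist
nine classes `F₁, …, F₉` with `F_k·F_k = −2`, `K·F_k = 0`, and `F_j·F_k = 0`
for `j ≠ k` (so even the homology classes of nine disjoint symplectic
`(−2)`-spheres in `CP² # 9CP²‾` cannot exist). -/
theorem stmt6 :
    ¬ ∃ F : Fin 9 → ℤ × (Fin 9 → ℤ),
      (∀ k, interL (F k) (F k) = -2) ∧
      (∀ k, interL (KclassL 9) (F k) = 0) ∧
      (∀ j k, j ≠ k → interL (F j) (F k) = 0) := by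
  rintro ⟨F, hFF, hKF, horth⟩
  have key := (interQ 9).card_add_two_le_finrank (v := fun k => toQ (F k))
    (LinearMap.BilinForm.iIsOrtho_def.2 fun j k hjk => by simp [horth j k hjk])
    (fun k => by simp [hFF k]) (interQ_KclassL_ne_zero 9)
    (by simp [interL, KclassL]) (fun k => by simp [hKF k])
  rw [Fintype.card_fin, finrank_prod, finrank_self, finrank_fin_fun] at key
  omega
end

section
/- Let N ≥ 1, let a ≥ 0 be an integer, and let c : {1,…,N} → ℤ satisfy 0 ≤ cᵢ ≤ a for all i and Σᵢ cᵢ ≤ 3a. Then there exist subsets S₁, …, S_a of {1,…,N}, each of cardinality at most 3, such that for every i, cᵢ = #{t : i ∈ S_t}. (Equivalently: in L_N the class aH − Σᵢ cᵢEᵢ can be written as a sum of a classes, each of the form H, H − Eᵢ, H − Eᵢ − Eⱼ, or H − Eᵢ − Eⱼ − E_k with distinct indices. This decomposition claim is used repeatedly in the paper, e.g., in the proofs of Lemmas 3.4, 3.6 and 5.1, to show that such classes have nonnegative symplectic area in a reduced basis.) -/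
/-!
Lay the multiplicities `cᵢ` end to end as consecutive blocks of integers in `[0, Σ cᵢ) ⊆ [0, 3a)`
and put `i` into `S_t` when the block of `i` meets the residue class of `t` modulo `a`
(McNaughton's wrap-around rule). A block has length `cᵢ ≤ a`, so it meets `cᵢ` distinct residue
classes; disjoint blocks inside `[0, 3a)` meet each residue class at most three times in total.
-/

open Finset Function

section Blocks

variable {ι : Type*} [Fintype ι] [LinearOrder ι] (d : ι → ℕ)

def prefixSum (i : ι) : ℕ := ∑ j with j < i, d j

def block (i : ι) : Finset ℕ := Ico (prefixSum d i) (prefixSum d i + d i)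

theorem prefixSum_add_self (i : ι) : prefixSum d i + d i = ∑ j with j ≤ i, d j := by
  have hIic : univ.filter (· ≤ i) = insert i (univ.filter (· < i)) := by
    ext j; simp [le_iff_lt_or_eq, or_comm]
  rw [hIic, sum_insert (by simp), add_comm, prefixSum]

theorem prefixSum_add_le_of_lt {i j : ι} (hij : i < j) : prefixSum d i + d i ≤ prefixSum d j := by
  rw [prefixSum_add_self]
  exact sum_le_sum_of_subset fun k hk => by
    simp only [mem_filter, mem_univ, true_and] at hk ⊢
    exact hk.trans_lt hij

theorem block_subset_range (i : ι) : block d i ⊆ range (∑ j, d j) := by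
  intro k hk
  have : prefixSum d i + d i ≤ ∑ j, d j := by
    rw [prefixSum_add_self]; exact sum_le_sum_of_subset (subset_univ _)
  simp only [block, mem_Ico, mem_range] at hk ⊢
  omega

theorem pairwise_disjoint_block : Pairwise (Disjoint on block d) := by
  have key : ∀ {i j : ι}, i < j → Disjoint (block d i) (block d j) := fun hij => by
    have := prefixSum_add_le_of_lt d hij
    simp only [block, disjoint_left, mem_Ico]
    omega
  intro i j hij
  rcases hij.lt_or_gt with h | h
  · exact key h
  · exact (key h).symm

end Blocks

section WrapAround

variable {ι : Type*} [Fintype ι] [LinearOrder ι] (d : ι → ℕ) (a : ℕ)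

def wrapAround (t : Fin a) : Finset ι := {i | ∃ k ∈ block d i, k % a = t}

theorem card_filter_mod_eq_le (m : ℕ) (t : Fin a) : #{k ∈ range (m * a) | k % a = t} ≤ m := by
  have : {k ∈ range (m * a) | k % a = t} ⊆ (range m).image (fun q => q * a + t) := by
    intro k hk
    rw [mem_filter, mem_range] at hk
    refine mem_image.2 ⟨k / a, mem_range.2 (Nat.div_lt_of_lt_mul ?_), ?_⟩
    · rw [mul_comm]; exact hk.1
    · rw [← hk.2, Nat.div_add_mod']
  exact (card_le_card this).trans card_image_le |>.trans (card_range m).le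

theorem card_wrapAround_le {m : ℕ} (hsum : ∑ i, d i ≤ m * a) (t : Fin a) :
    #(wrapAround d a t) ≤ m := by
  let hits (i : ι) : Finset ℕ := {k ∈ block d i | k % a = t}
  calc #(wrapAround d a t)
      ≤ #((wrapAround d a t).biUnion hits) := by
        refine card_le_card_biUnion (fun i _ j _ hij => ?_) fun i hi => ?_
        · exact disjoint_filter_filter (pairwise_disjoint_block d hij)
        · obtain ⟨k, hk, hkt⟩ := (mem_filter.1 hi).2
          exact ⟨k, mem_filter.2 ⟨hk, hkt⟩⟩
    _ ≤ #{k ∈ range (m * a) | k % a = t} := by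
        refine card_le_card (biUnion_subset.2 fun i _ => ?_)
        exact filter_subset_filter _ ((block_subset_range d i).trans (range_subset_range.2 hsum))
    _ ≤ m := card_filter_mod_eq_le a m t

theorem card_filter_mem_wrapAround [NeZero a] {i : ι} (hi : d i ≤ a) :
    #{t | i ∈ wrapAround d a t} = d i := by
  have hinj : Set.InjOn (Fin.ofNat a) (block d i) := by
    intro k hk k' hk' hkk'
    have hsub : block d i ⊆ Ico (prefixSum d i) (prefixSum d i + a) :=
      Ico_subset_Ico_right (by omega)
    exact Nat.mod_injOn_Ico _ a (hsub hk) (hsub hk') (by simpa [Fin.ext_iff] using hkk')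
  have : ({t | i ∈ wrapAround d a t} : Finset (Fin a)) = (block d i).image (Fin.ofNat a) := by
    ext t; simp [wrapAround, Fin.ext_iff]
  rw [this, card_image_of_injOn hinj, block, Nat.card_Ico, Nat.add_sub_cancel_left]

end WrapAround

theorem exists_card_le_and_card_filter_mem_eq {ι : Type*} [Fintype ι] [LinearOrder ι] {a m : ℕ}
    (d : ι → ℕ) (hda : ∀ i, d i ≤ a) (hsum : ∑ i, d i ≤ m * a) :
    ∃ S : Fin a → Finset ι, (∀ t, #(S t) ≤ m) ∧ ∀ i, #{t | i ∈ S t} = d i := by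
  rcases Nat.eq_zero_or_pos a with rfl | ha
  · exact ⟨finZeroElim, finZeroElim, fun i => by simp [Nat.le_zero.1 (hda i)]⟩
  · have : NeZero a := ⟨ha.ne'⟩
    exact ⟨wrapAround d a, card_wrapAround_le d a hsum,
      fun i => card_filter_mem_wrapAround d a (hda i)⟩

theorem stmt9_general (N : ℕ) (a : ℕ) (c : Fin N → ℤ)
    (hc0 : ∀ i, 0 ≤ c i) (hca : ∀ i, c i ≤ (a : ℤ))
    (hsum : (∑ i, c i) ≤ 3 * (a : ℤ)) :
    ∃ S : Fin a → Finset (Fin N), (∀ t, (S t).card ≤ 3) ∧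
      ∀ i, c i = ((Finset.univ.filter (fun t => i ∈ S t)).card : ℤ) := by
  have hcast : ∀ i, ((c i).toNat : ℤ) = c i := fun i => Int.toNat_of_nonneg (hc0 i)
  have hsum' : ∑ i, (c i).toNat ≤ 3 * a := by
    have : ((∑ i, (c i).toNat : ℕ) : ℤ) = ∑ i, c i := by push_cast [hcast]; rfl
    omega
  obtain ⟨S, hS, hcount⟩ :=
    exists_card_le_and_card_filter_mem_eq (fun i => (c i).toNat)
      (fun i => by have := hca i; omega) hsum'
  exact ⟨S, hS, fun i => by rw [hcount i, hcast]⟩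

/-- The decomposition claim used repeatedly in the paper (e.g. Lemmas 3.4, 3.6, 5.1):
if `a ≥ 0` and `c : {1,…,N} → ℤ` satisfies `0 ≤ cᵢ ≤ a` and `Σᵢ cᵢ ≤ 3a`, then there
are subsets `S₁, …, S_a` of `{1,…,N}`, each of size at most `3`, with
`cᵢ = #{t : i ∈ S_t}` for every `i`; equivalently the class `aH − Σᵢ cᵢEᵢ` in `L_N`
is a sum of `a` classes of the form `H`, `H − Eᵢ`, `H − Eᵢ − Eⱼ`, or
`H − Eᵢ − Eⱼ − E_k`. -/
theorem stmt9 (N : ℕ) (hN : 1 ≤ N) (a : ℕ) (c : Fin N → ℤ)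
    (hc0 : ∀ i, 0 ≤ c i) (hca : ∀ i, c i ≤ (a : ℤ))
    (hsum : (∑ i, c i) ≤ 3 * (a : ℤ)) :
    ∃ S : Fin a → Finset (Fin N), (∀ t, (S t).card ≤ 3) ∧
      ∀ i, c i = ((Finset.univ.filter (fun t => i ∈ S t)).card : ℤ) :=
  stmt9_general N a c hc0 hca hsum
end

section
/- Let n ≥ 1 be an integer and let g : ℂ → ℂ be continuous with g(0) ≠ 0. Define f : ℂ → ℂ by f(w) = wⁿ·g(w). Then there exist real numbers r > 0 and ρ > 0 such that for every c ∈ ℂ with 0 < |c| < ρ, the set {w ∈ ℂ : |w| ≤ r and f(w) = c} contains at least n distinct elements. (This is the counting claim established in the proof of Lemma 5.2: after the Carleman similarity principle reduces the parametrizing function to the form f(w) = wⁿg(w) with g continuous and g(0) ≠ 0, the equation f(w) = c has n distinct solutions near 0 for all sufficiently small c ≠ 0, obtained by solving w·h(w) = λ for each n-th root λ of c, where hⁿ = g.) -/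
open Complex Set

lemma slit_of_abs_lt {z : ℂ} (h : ‖z - 1‖ < 1) : z ∈ Complex.slitPlane := by
  have := Complex.mem_slitPlane_of_norm_lt_one (z := z - 1) (by simpa using h)
  simpa using this

lemma ne_zero_of_abs_lt {z : ℂ} (h : ‖z - 1‖ < 1) : z ≠ 0 :=
  Complex.slitPlane_ne_zero (slit_of_abs_lt h)

lemma liftExists (γ : ℝ → ℂ) (hγ : Continuous γ) (hne : ∀ t, γ t ≠ 0) :
    ∃ L : ℝ → ℂ, ContinuousOn L (Icc 0 1) ∧ ∀ t ∈ Icc (0:ℝ) 1, Complex.exp (L t) = γ t := by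
  -- minimum of |γ| on [0,1]
  obtain ⟨tm, htm, hmin⟩ := isCompact_Icc.exists_isMinOn (α := ℝ) (nonempty_Icc.2 zero_le_one)
    ((continuous_norm.comp hγ).continuousOn (s := Icc 0 1))
  set m : ℝ := ‖γ tm‖ with hm
  have hmpos : 0 < m := by
    simpa [hm] using (norm_pos_iff.mpr (hne tm))
  have hminle : ∀ t ∈ Icc (0:ℝ) 1, m ≤ ‖γ t‖ := fun t ht => hmin ht
  -- uniform continuity
  have huc : UniformContinuousOn γ (Icc 0 1) :=
    isCompact_Icc.uniformContinuousOn_of_continuous hγ.continuousOn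
  rw [Metric.uniformContinuousOn_iff] at huc
  obtain ⟨δ, hδ, hucd⟩ := huc m hmpos
  obtain ⟨N, hN⟩ := exists_nat_one_div_lt hδ
  set Nr : ℝ := (N + 1 : ℝ) with hNr
  have hNrpos : 0 < Nr := by positivity
  -- key step estimate
  have hstep : ∀ a t : ℝ, a ∈ Icc (0:ℝ) 1 → t ∈ Icc (0:ℝ) 1 → |t - a| ≤ 1 / Nr →
      ‖γ t / γ a - 1‖ < 1 := by
    intro a t ha ht hd
    have hγa : γ a ≠ 0 := hne a
    have h1 : dist (γ t) (γ a) < m := by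
      apply hucd t ht a ha
      rw [Real.dist_eq]
      exact lt_of_le_of_lt hd hN
    have h2 : ‖γ t - γ a‖ < ‖γ a‖ :=
      lt_of_lt_of_le (by simpa [Complex.dist_eq] using h1) (hminle a ha)
    have : γ t / γ a - 1 = (γ t - γ a) / γ a := by field_simp
    rw [this, norm_div, div_lt_one (norm_pos_iff.mpr hγa)]
    exact h2
  -- induction
  have main : ∀ k : ℕ, k ≤ N + 1 → ∃ L : ℝ → ℂ, ContinuousOn L (Icc 0 (k / Nr)) ∧
      ∀ t ∈ Icc (0:ℝ) (k / Nr), Complex.exp (L t) = γ t := by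
    intro k
    induction k with
    | zero =>
      intro _
      refine ⟨fun _ => Complex.log (γ 0), continuousOn_const, ?_⟩
      intro t ht
      simp only [Nat.cast_zero, zero_div] at ht
      have : t = 0 := le_antisymm ht.2 ht.1
      rw [this, Complex.exp_log (hne 0)]
    | succ k ih =>
      intro hk1
      obtain ⟨L, hLc, hL⟩ := ih (le_of_lt hk1)
      set a : ℝ := k / Nr with ha
      set b : ℝ := (k + 1 : ℕ) / Nr with hb
      have hab : a ≤ b := by
        rw [ha, hb]
        gcongr
        exact_mod_cast Nat.le_succ k
      have ha0 : 0 ≤ a := by positivity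
      have hb1 : b ≤ 1 := by
        rw [hb, div_le_one hNrpos]
        rw [hNr]; exact_mod_cast hk1
      have ha1 : a ≤ 1 := le_trans hab hb1
      have hba : b - a = 1 / Nr := by
        rw [hb, ha]
        push_cast
        ring
      refine ⟨fun t => L (min t a) + Complex.log (γ (max t a) / γ a), ?_, ?_⟩
      · apply ContinuousOn.add
        · apply hLc.comp (Continuous.continuousOn (by continuity))
          intro t ht
          exact ⟨le_min ht.1 ha0, min_le_right _ _⟩
        · intro t ht
          apply ContinuousWithinAt.mono ?_ (subset_univ _)
          rw [continuousWithinAt_univ]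
          have hmem : max t a ∈ Icc (0:ℝ) 1 := ⟨le_trans ha0 (le_max_right _ _),
            max_le (le_trans ht.2 hb1) ha1⟩
          have hdist : |max t a - a| ≤ 1 / Nr := by
            rw [abs_sub_le_iff]
            constructor
            · rw [← hba]; rcases max_cases t a with ⟨h1, _⟩ | ⟨h1, _⟩ <;> rw [h1] <;> linarith [ht.2]
            · linarith [le_max_right t a, hNrpos, one_div_pos.2 hNrpos]
          have hslit := slit_of_abs_lt (hstep a (max t a) ⟨ha0, ha1⟩ hmem hdist)
          exact ContinuousAt.clog (((hγ.comp (continuous_id.max continuous_const)).div_const _).continuousAt) hslit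
      · intro t ht
        rcases le_total t a with h | h
        · simp only [inf_eq_left.mpr h, sup_eq_right.mpr h, div_self (hne a), Complex.log_one, add_zero]
          exact hL t ⟨ht.1, h⟩
        · simp only [inf_eq_right.mpr h, sup_eq_left.mpr h]
          rw [Complex.exp_add, hL a ⟨ha0, le_refl a⟩,
            Complex.exp_log (div_ne_zero (hne t) (hne a)), mul_div_cancel₀ _ (hne a)]
  obtain ⟨L, hLc, hL⟩ := main (N + 1) (le_refl _)
  have : ((N + 1 : ℕ) : ℝ) / Nr = 1 := by
    rw [hNr]; push_cast; rw [div_self]; positivity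
  rw [this] at hLc hL
  exact ⟨L, hLc, hL⟩

-- real-valued helper: a continuous function on [0,1] with values in 2πℤ has equal endpoints
lemma intstep_const {u : ℝ → ℝ} (huc : ContinuousOn u (Icc 0 1))
    (hint : ∀ t ∈ Icc (0:ℝ) 1, ∃ k : ℤ, u t = k * (2 * Real.pi)) : u 1 = u 0 := by
  have h01 : (0:ℝ) ∈ Icc (0:ℝ) 1 := ⟨le_refl _, zero_le_one⟩
  have h11 : (1:ℝ) ∈ Icc (0:ℝ) 1 := ⟨zero_le_one, le_refl _⟩
  have hπ : (0:ℝ) < Real.pi := Real.pi_pos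
  obtain ⟨k0, hk0⟩ := hint 0 h01
  obtain ⟨k1, hk1⟩ := hint 1 h11
  by_contra hne
  have hkk : k0 ≠ k1 := fun h => hne (by rw [hk1, hk0, h])
  have oddmul : ∀ t ∈ Icc (0:ℝ) 1, ∀ j : ℤ, u t ≠ j * (2*Real.pi) + Real.pi := by
    intro t ht j hj
    obtain ⟨k, hk⟩ := hint t ht
    rw [hk] at hj
    have : (2*(k:ℝ) : ℝ) = 2*j + 1 := by nlinarith
    have : (2*k : ℤ) = 2*j+1 := by exact_mod_cast this
    omega
  rcases lt_or_gt_of_ne (fun h : u 0 = u 1 => hne h.symm) with h | h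
  · -- u 0 < u 1 : use value k0*(2π)+π
    have hlt : (k0:ℝ) < k1 := by
      rw [hk0, hk1] at h
      by_contra hle
      push_neg at hle
      have : (k1:ℝ) * (2*Real.pi) ≤ k0 * (2*Real.pi) := by nlinarith
      linarith
    have hk01 : (k0:ℝ) + 1 ≤ k1 := by exact_mod_cast hlt
    have hv : (k0:ℝ)*(2*Real.pi) + Real.pi ∈ Ioo (u 0) (u 1) := by
      constructor
      · rw [hk0]; linarith
      · rw [hk1]; nlinarith
    obtain ⟨t, ht, hrt⟩ := intermediate_value_Ioo zero_le_one huc hv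
    exact oddmul t (Ioo_subset_Icc_self ht) k0 hrt
  · have hlt : (k1:ℝ) < k0 := by
      rw [hk0, hk1] at h
      by_contra hle
      push_neg at hle
      have : (k0:ℝ) * (2*Real.pi) ≤ k1 * (2*Real.pi) := by nlinarith
      linarith
    have hk01 : (k1:ℝ) + 1 ≤ k0 := by exact_mod_cast hlt
    have hv : (k1:ℝ)*(2*Real.pi) + Real.pi ∈ Ioo (u 1) (u 0) := by
      constructor
      · rw [hk1]; linarith
      · rw [hk0]; nlinarith
    obtain ⟨t, ht, hrt⟩ := intermediate_value_Ioo' zero_le_one huc hv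
    exact oddmul t (Ioo_subset_Icc_self ht) k1 hrt

lemma liftDiff {γ L₁ L₂ : ℝ → ℂ} (h₁c : ContinuousOn L₁ (Icc 0 1)) (h₂c : ContinuousOn L₂ (Icc 0 1))
    (h₁ : ∀ t ∈ Icc (0:ℝ) 1, Complex.exp (L₁ t) = γ t)
    (h₂ : ∀ t ∈ Icc (0:ℝ) 1, Complex.exp (L₂ t) = γ t) :
    L₁ 1 - L₁ 0 = L₂ 1 - L₂ 0 := by
  have hint : ∀ t ∈ Icc (0:ℝ) 1, ∃ k : ℤ, L₁ t - L₂ t = k * (2 * Real.pi * I) := by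
    intro t ht
    rw [← Complex.exp_eq_one_iff, Complex.exp_sub, h₁ t ht, h₂ t ht, div_self]
    rw [← h₁ t ht]; exact Complex.exp_ne_zero _
  have hrep : ∀ t ∈ Icc (0:ℝ) 1, L₁ t - L₂ t = ((L₁ t - L₂ t).im : ℂ) * I := by
    intro t ht
    obtain ⟨k, hk⟩ := hint t ht
    rw [hk]; apply Complex.ext <;> simp
  have hint' : ∀ t ∈ Icc (0:ℝ) 1, ∃ k : ℤ, (fun t => (L₁ t - L₂ t).im) t = k * (2 * Real.pi) := by
    intro t ht
    obtain ⟨k, hk⟩ := hint t ht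
    refine ⟨k, ?_⟩
    simp only [hk]
    simp [mul_assoc]
  have huc : ContinuousOn (fun t => (L₁ t - L₂ t).im) (Icc 0 1) :=
    Complex.continuous_im.comp_continuousOn (h₁c.sub h₂c)
  have key := intstep_const huc hint'
  have h1 : L₁ 1 - L₂ 1 = L₁ 0 - L₂ 0 := by
    rw [hrep 1 ⟨zero_le_one, le_refl _⟩, hrep 0 ⟨le_refl _, zero_le_one⟩, key]
  linear_combination h1

def WindIs (γ : ℝ → ℂ) (z : ℂ) : Prop :=
  ∃ L : ℝ → ℂ, ContinuousOn L (Icc 0 1) ∧ (∀ t ∈ Icc (0:ℝ) 1, Complex.exp (L t) = γ t) ∧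
    L 1 - L 0 = z

lemma windIs_unique {γ : ℝ → ℂ} {z z' : ℂ} (h : WindIs γ z) (h' : WindIs γ z') : z = z' := by
  obtain ⟨L, hc, he, hz⟩ := h
  obtain ⟨L', hc', he', hz'⟩ := h'
  rw [← hz, ← hz']
  exact liftDiff hc hc' he he'

lemma windIs_compare {γ₁ γ₂ : ℝ → ℂ} {z : ℂ} (hγ₁ : Continuous γ₁) (hγ₂ : Continuous γ₂)
    (hcross : γ₁ 1 * γ₂ 0 = γ₁ 0 * γ₂ 1)
    (hlt : ∀ t ∈ Icc (0:ℝ) 1, ‖γ₁ t - γ₂ t‖ < ‖γ₂ t‖)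
    (h : WindIs γ₂ z) : WindIs γ₁ z := by
  obtain ⟨L, hc, he, hz⟩ := h
  have h01 : (0:ℝ) ∈ Icc (0:ℝ) 1 := ⟨le_refl _, zero_le_one⟩
  have h11 : (1:ℝ) ∈ Icc (0:ℝ) 1 := ⟨zero_le_one, le_refl _⟩
  have hne2 : ∀ t ∈ Icc (0:ℝ) 1, γ₂ t ≠ 0 := by
    intro t ht h0
    have := hlt t ht
    rw [h0] at this
    simp only [sub_zero, norm_zero] at this
    exact absurd this (norm_nonneg _).not_gt
  have hne1 : ∀ t ∈ Icc (0:ℝ) 1, γ₁ t ≠ 0 := by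
    intro t ht h0
    have := hlt t ht
    rw [h0] at this
    rw [show ((0:ℂ) - γ₂ t) = -(γ₂ t) by ring] at this
    simp only [norm_neg] at this
    exact lt_irrefl _ this
  have hball : ∀ t ∈ Icc (0:ℝ) 1, ‖γ₁ t / γ₂ t - 1‖ < 1 := by
    intro t ht
    have h2 := hne2 t ht
    have heq : γ₁ t / γ₂ t - 1 = (γ₁ t - γ₂ t) / γ₂ t := by field_simp
    rw [heq, norm_div, div_lt_one (norm_pos_iff.mpr h2)]
    exact hlt t ht
  refine ⟨fun t => L t + Complex.log (γ₁ t / γ₂ t), ?_, ?_, ?_⟩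
  · apply hc.add
    intro t ht
    apply ContinuousWithinAt.mono ?_ (subset_univ _)
    rw [continuousWithinAt_univ]
    exact ContinuousAt.clog ((hγ₁.continuousAt).div (hγ₂.continuousAt) (hne2 t ht))
      (slit_of_abs_lt (hball t ht))
  · intro t ht
    rw [Complex.exp_add, he t ht,
      Complex.exp_log (div_ne_zero (hne1 t ht) (hne2 t ht)),
      mul_div_cancel₀ _ (hne2 t ht)]
  · have hu : γ₁ 1 / γ₂ 1 = γ₁ 0 / γ₂ 0 := by
      rw [div_eq_div_iff (hne2 1 h11) (hne2 0 h01)]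
      linear_combination hcross
    simp only [hu]
    rw [← hz]
    ring

lemma solveKey {r : ℝ} (hr : 0 < r) {h : ℂ → ℂ}
    (hhc : ContinuousOn h (Metric.closedBall 0 r))
    (hb : ∀ w ∈ Metric.closedBall (0:ℂ) r, ‖h w - h 0‖ < ‖h 0‖ / 2)
    {lam : ℂ} (hl0 : lam ≠ 0) (hl : ‖lam‖ < ‖h 0‖ * r / 2) :
    ∃ w : ℂ, ‖w‖ ≤ r ∧ w * h w = lam := by
  by_contra hcon
  push_neg at hcon
  have h0mem : (0:ℂ) ∈ Metric.closedBall (0:ℂ) r := Metric.mem_closedBall_self hr.le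
  have hh0pos : 0 < ‖h 0‖ := by
    have := hb 0 h0mem
    simp only [sub_self, norm_zero] at this
    linarith
  have hh0 : h 0 ≠ 0 := by
    intro hz; rw [hz] at hh0pos; simp at hh0pos
  -- setup
  set E : ℝ → ℂ := fun t => Complex.exp (((2 * Real.pi * t : ℝ) : ℂ) * I) with hE
  set pr : ℝ → ℝ := fun s => max 0 (min s 1) with hpr
  set Ψ : ℝ × ℝ → ℂ := fun p => (pr p.1 * r : ℝ) * E p.2 * h ((pr p.1 * r : ℝ) * E p.2) - lam
    with hΨ
  have hEc : Continuous E := by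
    apply Complex.continuous_exp.comp
    exact (Complex.continuous_ofReal.comp (by continuity)).mul continuous_const
  have hEabs : ∀ t, ‖E t‖ = 1 := fun t => Complex.norm_exp_ofReal_mul_I _
  have hEne : ∀ t, E t ≠ 0 := fun t => Complex.exp_ne_zero _
  have hE0 : E 0 = 1 := by simp [hE]
  have hE1 : E 1 = 1 := by
    simp only [hE, mul_one]
    rw [show (((2 * Real.pi : ℝ)) : ℂ) * I = 2 * (Real.pi : ℂ) * I by push_cast; ring]
    exact Complex.exp_two_pi_mul_I
  have hprc : Continuous pr := continuous_const.max (continuous_id.min continuous_const)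
  have hpr01 : ∀ s, pr s ∈ Icc (0:ℝ) 1 := fun s => ⟨le_max_left _ _,
    max_le zero_le_one (min_le_right _ _)⟩
  have hpr0 : pr 0 = 0 := by simp [hpr]
  have hpr1 : pr 1 = 1 := by simp [hpr]
  have hin : ∀ p : ℝ × ℝ, ((pr p.1 * r : ℝ) : ℂ) * E p.2 ∈ Metric.closedBall (0:ℂ) r := by
    intro p
    rw [Metric.mem_closedBall, dist_zero_right]
    have : ‖((pr p.1 * r : ℝ) : ℂ) * E p.2‖ = |pr p.1 * r| * 1 := by
      rw [norm_mul, Complex.norm_real, ← hEabs p.2]; rfl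
    rw [this, mul_one, _root_.abs_of_nonneg (mul_nonneg (hpr01 p.1).1 hr.le)]
    calc pr p.1 * r ≤ 1 * r := by
          apply mul_le_mul_of_nonneg_right (hpr01 p.1).2 hr.le
      _ = r := one_mul r
  have hinnerc : Continuous fun p : ℝ × ℝ => ((pr p.1 * r : ℝ) : ℂ) * E p.2 := by
    apply Continuous.mul
    · exact Complex.continuous_ofReal.comp ((hprc.comp continuous_fst).mul continuous_const)
    · exact hEc.comp continuous_snd
  have hΨc : Continuous Ψ := by
    apply Continuous.sub ?_ continuous_const
    exact hinnerc.mul (hhc.comp_continuous hinnerc hin)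
  have hΨne : ∀ p, Ψ p ≠ 0 := by
    intro p hz
    have hw : ‖((pr p.1 * r : ℝ) : ℂ) * E p.2‖ ≤ r := by
      have := hin p
      rwa [Metric.mem_closedBall, dist_zero_right] at this
    exact hcon _ hw (sub_eq_zero.mp hz)
  set γ : ℝ → ℝ → ℂ := fun s t => Ψ (s, t) with hγ
  have hγc : ∀ s, Continuous (γ s) := fun s => hΨc.comp (continuous_const.prodMk continuous_id)
  have hγne : ∀ s t, γ s t ≠ 0 := fun s t => hΨne (s, t)
  have hper : ∀ s, γ s 1 = γ s 0 := by
    intro s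
    simp only [hγ, hΨ, hE1, hE0]
  -- local constancy of the winding number
  have locconst : ∀ s₀ : ℝ, ∃ ε > 0, ∀ s, |s - s₀| < ε → ∀ z, WindIs (γ s₀) z → WindIs (γ s) z := by
    intro s₀
    obtain ⟨tm, htm, hmin⟩ := isCompact_Icc.exists_isMinOn (α := ℝ) (nonempty_Icc.2 zero_le_one)
      ((continuous_norm.comp (hγc s₀)).continuousOn (s := Icc 0 1))
    set m : ℝ := ‖γ s₀ tm‖ with hm
    have hmpos : 0 < m := norm_pos_iff.mpr (hγne s₀ tm)
    have hminle : ∀ t ∈ Icc (0:ℝ) 1, m ≤ ‖γ s₀ t‖ := fun t ht => hmin ht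
    set K : Set (ℝ × ℝ) := Icc (s₀ - 1) (s₀ + 1) ×ˢ Icc (0:ℝ) 1 with hK
    have hKc : IsCompact K := isCompact_Icc.prod isCompact_Icc
    have huc : UniformContinuousOn Ψ K := hKc.uniformContinuousOn_of_continuous hΨc.continuousOn
    rw [Metric.uniformContinuousOn_iff] at huc
    obtain ⟨δ, hδ, hucd⟩ := huc m hmpos
    refine ⟨min δ 1, lt_min hδ zero_lt_one, ?_⟩
    intro s hs z hwz
    have hs1 : |s - s₀| ≤ 1 := le_of_lt (lt_of_lt_of_le hs (min_le_right _ _))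
    have hsδ : |s - s₀| < δ := lt_of_lt_of_le hs (min_le_left _ _)
    apply windIs_compare (hγc s) (hγc s₀) (by rw [hper s, hper s₀]) ?_ hwz
    intro t ht
    have hmem1 : (s, t) ∈ K := by
      refine ⟨?_, ht⟩
      rw [mem_Icc]
      rw [abs_sub_le_iff] at hs1
      constructor <;> linarith [hs1.1, hs1.2]
    have hmem2 : (s₀, t) ∈ K := by
      refine ⟨?_, ht⟩
      rw [mem_Icc]
      constructor <;> linarith
    have hd : dist ((s, t) : ℝ × ℝ) (s₀, t) < δ := by
      calc dist ((s, t) : ℝ × ℝ) (s₀, t) = max (dist s s₀) (dist t t) := Prod.dist_eq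
        _ = dist s s₀ := by rw [dist_self, max_eq_left dist_nonneg]
        _ < δ := by rwa [Real.dist_eq]
    have := hucd (s, t) hmem1 (s₀, t) hmem2 hd
    rw [Complex.dist_eq] at this
    exact lt_of_lt_of_le this (hminle t ht)
  -- winding at s = 0 is 0
  have W0 : WindIs (γ 0) 0 := by
    have hγ0 : ∀ t, γ 0 t = -lam := by
      intro t
      simp only [hγ, hΨ, hpr0]
      push_cast
      simp
    refine ⟨fun _ => Complex.log (-lam), continuousOn_const, ?_, sub_self _⟩
    intro t _
    rw [Complex.exp_log (neg_ne_zero.mpr hl0), hγ0 t]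
  -- winding at s = 1 is 2πi
  have W1 : WindIs (γ 1) (((2 * Real.pi : ℝ) : ℂ) * I) := by
    set v : ℝ → ℂ := fun t => γ 1 t / ((h 0 * (r : ℂ)) * E t) with hv
    have hdenne : ∀ t, (h 0 * (r : ℂ)) * E t ≠ 0 := by
      intro t
      exact mul_ne_zero (mul_ne_zero hh0 (by exact_mod_cast hr.ne')) (hEne t)
    have hvne : ∀ t, v t ≠ 0 := fun t => div_ne_zero (hγne 1 t) (hdenne t)
    have hγ1 : ∀ t, γ 1 t = ((r:ℂ) * E t) * h ((r:ℂ) * E t) - lam := by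
      intro t
      simp only [hγ, hΨ, hpr1]
      push_cast
      ring_nf
    have hvball : ∀ t, ‖v t - 1‖ < 1 := by
      intro t
      have habs_den : ‖(h 0 * (r : ℂ)) * E t‖ = ‖h 0‖ * r := by
        rw [norm_mul, norm_mul, hEabs, mul_one, Complex.norm_real, Real.norm_eq_abs, abs_of_pos hr]
      have hnum : γ 1 t - (h 0 * (r:ℂ)) * E t
          = ((r:ℂ) * E t) * (h ((r:ℂ) * E t) - h 0) - lam := by
        rw [hγ1 t]; ring
      have hrEt : ((r:ℂ) * E t) ∈ Metric.closedBall (0:ℂ) r := by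
        have hnorm : ‖(r:ℂ) * E t‖ = r := by
          rw [norm_mul, Complex.norm_real, Real.norm_eq_abs, hEabs,
            mul_one, _root_.abs_of_pos hr]
        rw [Metric.mem_closedBall, dist_zero_right, hnorm]
      have hnumabs : ‖γ 1 t - (h 0 * (r:ℂ)) * E t‖ < ‖h 0‖ * r := by
        rw [hnum]
        calc ‖((r:ℂ) * E t) * (h ((r:ℂ) * E t) - h 0) - lam‖
            ≤ ‖((r:ℂ) * E t) * (h ((r:ℂ) * E t) - h 0)‖ + ‖lam‖ := by
              simpa [sub_eq_add_neg] using
                norm_add_le (((r:ℂ) * E t) * (h ((r:ℂ) * E t) - h 0)) (-lam)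
          _ < ‖h 0‖ * r := by
              have h1 : ‖((r:ℂ) * E t)‖ = r := by
                rw [norm_mul, hEabs, mul_one, Complex.norm_real, Real.norm_eq_abs, abs_of_pos hr]
              rw [norm_mul, h1]
              have h2 := hb _ hrEt
              nlinarith [norm_nonneg lam]
      have : v t - 1 = (γ 1 t - (h 0 * (r:ℂ)) * E t) / ((h 0 * (r:ℂ)) * E t) :=
        div_sub_one (hdenne t)
      rw [this, norm_div, habs_den, div_lt_one (by positivity)]
      exact hnumabs
    have hvc : Continuous v := (hγc 1).div ((continuous_const.mul hEc)) hdenne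
    refine ⟨fun t => Complex.log (h 0 * (r:ℂ)) + ((2 * Real.pi * t : ℝ) : ℂ) * I
      + Complex.log (v t), ?_, ?_, ?_⟩
    · apply ContinuousOn.add
      · apply ContinuousOn.add continuousOn_const
        apply Continuous.continuousOn
        exact (Complex.continuous_ofReal.comp
          ((continuous_const.mul continuous_id))).mul continuous_const
      · intro t _
        apply ContinuousWithinAt.mono ?_ (subset_univ _)
        rw [continuousWithinAt_univ]
        exact ContinuousAt.clog hvc.continuousAt (slit_of_abs_lt (hvball t))
    · intro t _
      rw [Complex.exp_add, Complex.exp_add,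
        Complex.exp_log (mul_ne_zero hh0 (by exact_mod_cast hr.ne')),
        Complex.exp_log (hvne t)]
      rw [show Complex.exp (((2 * Real.pi * t : ℝ) : ℂ) * I) = E t from rfl, mul_assoc]
      simp only [hv]
      field_simp
      rw [div_eq_iff (mul_ne_zero (by exact_mod_cast hr.ne') (hEne t))]
      ring
    · have hv10 : v 1 = v 0 := by
        simp only [hv, hper 1, hE1, hE0]
      simp only [hv10]
      push_cast
      ring
  -- clopen argument
  set Q : Set ℝ := {s | WindIs (γ s) 0} with hQ
  have hQopen : IsOpen Q := by
    rw [Metric.isOpen_iff]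
    intro s₀ hs₀
    obtain ⟨ε, hε, hloc⟩ := locconst s₀
    refine ⟨ε, hε, ?_⟩
    intro s hs
    rw [Metric.mem_ball, Real.dist_eq] at hs
    exact hloc s hs 0 hs₀
  have hQcopen : IsOpen Qᶜ := by
    rw [Metric.isOpen_iff]
    intro s₀ hs₀
    obtain ⟨ε, hε, hloc⟩ := locconst s₀
    obtain ⟨L, hLc, hL⟩ := liftExists (γ s₀) (hγc s₀) (hγne s₀)
    have hwind : WindIs (γ s₀) (L 1 - L 0) := ⟨L, hLc, hL, rfl⟩
    refine ⟨ε, hε, ?_⟩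
    intro s hs hsQ
    rw [Metric.mem_ball, Real.dist_eq] at hs
    have h1 : WindIs (γ s) (L 1 - L 0) := hloc s hs _ hwind
    have h2 : L 1 - L 0 = 0 := windIs_unique h1 hsQ
    rw [h2] at hwind
    exact hs₀ hwind
  have hQall : Q = univ := by
    apply IsClopen.eq_univ ⟨isOpen_compl_iff.mp hQcopen, hQopen⟩
    exact ⟨0, W0⟩
  have h1Q : WindIs (γ 1) 0 := by
    have : (1:ℝ) ∈ Q := hQall ▸ mem_univ 1
    exact this
  have : ((2 * Real.pi : ℝ) : ℂ) * I = 0 := windIs_unique W1 h1Q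
  rw [Complex.ext_iff] at this
  simp at this

/-- The counting claim in the proof of Lemma 5.2: if `n ≥ 1`, `g : ℂ → ℂ` is
continuous with `g(0) ≠ 0`, and `f(w) = wⁿ·g(w)`, then there are `r > 0` and
`ρ > 0` such that for every `c` with `0 < |c| < ρ`, the set
`{w : |w| ≤ r, f(w) = c}` contains at least `n` distinct elements. -/
theorem stmt14 (n : ℕ) (hn : 1 ≤ n) (g : ℂ → ℂ) (hg : Continuous g)
    (hg0 : g 0 ≠ 0) :
    ∃ r : ℝ, 0 < r ∧ ∃ ρ : ℝ, 0 < ρ ∧ ∀ c : ℂ, 0 < ‖c‖ → ‖c‖ < ρ →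
      ∃ S : Finset ℂ, n ≤ S.card ∧ ∀ w ∈ S, ‖w‖ ≤ r ∧ w ^ n * g w = c := by
  have hg0abs : 0 < ‖g 0‖ := norm_pos_iff.mpr hg0
  have hn0 : (n:ℂ) ≠ 0 := Nat.cast_ne_zero.mpr (by omega)
  set a : ℂ := Complex.log (g 0) / n with ha
  set q : ℂ → ℂ := fun w => Complex.exp (a + Complex.log (g w / g 0) / n) with hq
  have hq0 : q 0 = Complex.exp a := by
    simp only [hq, div_self hg0, Complex.log_one, zero_div, add_zero]
  have hq0ne : q 0 ≠ 0 := by rw [hq0]; exact Complex.exp_ne_zero a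
  have hq0abs : 0 < ‖q 0‖ := norm_pos_iff.mpr hq0ne
  -- continuity of q at points where g w / g 0 is in the slit plane
  have hqat : ∀ w : ℂ, g w / g 0 ∈ Complex.slitPlane → ContinuousAt q w := by
    intro w hw
    apply Complex.continuous_exp.continuousAt.comp
    apply ContinuousAt.add continuousAt_const
    apply ContinuousAt.div_const
    exact ContinuousAt.clog ((hg.continuousAt).div_const _) hw
  have hq00 : ContinuousAt q 0 := hqat 0 (by rw [div_self hg0]; exact Complex.one_mem_slitPlane)
  -- choose the radius
  obtain ⟨d1, hd1, hgd⟩ := Metric.continuousAt_iff.mp hg.continuousAt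
    (‖g 0‖ / 2) (by positivity)
  obtain ⟨d2, hd2, hqd⟩ := Metric.continuousAt_iff.mp hq00 (‖q 0‖ / 2) (by positivity)
  set r : ℝ := min d1 d2 / 2 with hrdef
  have hr : 0 < r := by positivity
  have hrd1 : r < d1 := by
    calc r < min d1 d2 := by rw [hrdef]; linarith [lt_min hd1 hd2]
      _ ≤ d1 := min_le_left _ _
  have hrd2 : r < d2 := by
    calc r < min d1 d2 := by rw [hrdef]; linarith [lt_min hd1 hd2]
      _ ≤ d2 := min_le_right _ _
  have hball_g : ∀ w ∈ Metric.closedBall (0:ℂ) r,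
      ‖g w - g 0‖ < ‖g 0‖ / 2 := by
    intro w hw
    rw [Metric.mem_closedBall, dist_zero_right] at hw
    have := hgd (show dist w 0 < d1 by rw [dist_zero_right]; linarith)
    rwa [Complex.dist_eq] at this
  have hball_q : ∀ w ∈ Metric.closedBall (0:ℂ) r,
      ‖q w - q 0‖ < ‖q 0‖ / 2 := by
    intro w hw
    rw [Metric.mem_closedBall, dist_zero_right] at hw
    have := hqd (show dist w 0 < d2 by rw [dist_zero_right]; linarith)
    rwa [Complex.dist_eq] at this
  have hgne : ∀ w ∈ Metric.closedBall (0:ℂ) r, g w ≠ 0 := by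
    intro w hw h0
    have := hball_g w hw
    rw [h0, zero_sub, norm_neg] at this
    linarith
  have hslit : ∀ w ∈ Metric.closedBall (0:ℂ) r, g w / g 0 ∈ Complex.slitPlane := by
    intro w hw
    apply slit_of_abs_lt
    have heq : g w / g 0 - 1 = (g w - g 0) / g 0 := by field_simp
    rw [heq, norm_div, div_lt_one hg0abs]
    linarith [hball_g w hw]
  have hqcont : ContinuousOn q (Metric.closedBall 0 r) :=
    fun w hw => (hqat w (hslit w hw)).continuousWithinAt
  have hqn : ∀ w ∈ Metric.closedBall (0:ℂ) r, (q w) ^ n = g w := by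
    intro w hw
    rw [hq]
    simp only
    rw [← Complex.exp_nat_mul]
    have harg : (n:ℂ) * (a + Complex.log (g w / g 0) / n)
        = Complex.log (g 0) + Complex.log (g w / g 0) := by
      rw [ha]
      field_simp
    rw [harg, Complex.exp_add, Complex.exp_log hg0,
      Complex.exp_log (div_ne_zero (hgne w hw) hg0), mul_div_cancel₀ _ hg0]
  refine ⟨r, hr, (‖q 0‖ * r / 2) ^ n, by positivity, ?_⟩
  intro c hc0 hcρ
  have hcne : c ≠ 0 := by
    intro h0; rw [h0] at hc0; simp at hc0
  set lam : ℕ → ℂ := fun k => Complex.exp ((Complex.log c + k * (2 * Real.pi * I)) / n)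
    with hlam
  have hlamne : ∀ k, lam k ≠ 0 := fun k => Complex.exp_ne_zero _
  have hlamn : ∀ k : ℕ, (lam k) ^ n = c := by
    intro k
    rw [hlam]
    simp only
    rw [← Complex.exp_nat_mul, mul_div_cancel₀ _ hn0, Complex.exp_add,
      Complex.exp_log hcne, Complex.exp_nat_mul_two_pi_mul_I, mul_one]
  have hlamabs : ∀ k : ℕ, ‖lam k‖ < ‖q 0‖ * r / 2 := by
    intro k
    apply lt_of_pow_lt_pow_left₀ n (by positivity)
    rw [← norm_pow, hlamn k]
    exact hcρ
  have hlaminj : ∀ k < n, ∀ j < n, lam k = lam j → k = j := by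
    intro k hk j hj hkj
    rw [hlam] at hkj
    simp only at hkj
    rw [Complex.exp_eq_exp_iff_exists_int] at hkj
    obtain ⟨m, hm⟩ := hkj
    rw [div_eq_iff hn0, add_mul, div_mul_cancel₀ _ hn0] at hm
    have h2 : ((k:ℂ) - j - m * n) * (2 * (Real.pi:ℂ) * I) = 0 := by
      linear_combination hm
    have h3 : (k:ℂ) = (j:ℂ) + m * n := by
      rcases mul_eq_zero.mp h2 with h | h
      · linear_combination h
      · exact absurd h Complex.two_pi_I_ne_zero
    have h4 : (k:ℤ) - j = m * n := by
      have : (k:ℤ) = (j:ℤ) + m * n := by exact_mod_cast h3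
      omega
    have hm0 : m = 0 := by
      by_contra hm0
      have h1 : 1 ≤ |m| := Int.one_le_abs (by exact_mod_cast hm0)
      have h5 : (n:ℤ) ≤ |(k:ℤ) - j| := by
        calc (n:ℤ) = n * 1 := by ring
          _ ≤ n * |m| := by
              apply mul_le_mul_of_nonneg_left h1 (by positivity)
          _ = |m * n| := by
              rw [abs_mul, abs_of_nonneg (show (0:ℤ) ≤ n by positivity), mul_comm]
          _ = |(k:ℤ) - j| := by rw [← h4]
      have h6 : |(k:ℤ) - j| < n := by
        rw [abs_lt]
        constructor <;> omega
      linarith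
    rw [hm0] at h4
    omega
  have H : ∀ k, k < n → ∃ w : ℂ, ‖w‖ ≤ r ∧ w * q w = lam k :=
    fun k _ => solveKey hr hqcont hball_q (hlamne k) (hlamabs k)
  set F : ℕ → ℂ := fun k => if hk : k < n then (H k hk).choose else 0 with hF
  have hFspec : ∀ k, k < n → ‖F k‖ ≤ r ∧ F k * q (F k) = lam k := by
    intro k hk
    rw [hF]
    simp only [hk, dif_pos]
    exact (H k hk).choose_spec
  refine ⟨(Finset.range n).image F, ?_, ?_⟩
  · rw [Finset.card_image_of_injOn, Finset.card_range]
    intro k hk j hj hkj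
    rw [Finset.mem_coe, Finset.mem_range] at hk hj
    apply hlaminj k hk j hj
    rw [← (hFspec k hk).2, ← (hFspec j hj).2, hkj]
  · intro w hw
    rw [Finset.mem_image] at hw
    obtain ⟨k, hk, rfl⟩ := hw
    rw [Finset.mem_range] at hk
    obtain ⟨habs, heq⟩ := hFspec k hk
    refine ⟨habs, ?_⟩
    have hmem : F k ∈ Metric.closedBall (0:ℂ) r := by
      rw [Metric.mem_closedBall, dist_zero_right]
      exact habs
    rw [← hqn (F k) hmem, ← mul_pow, heq, hlamn k]
end

section
/- The following identities hold for the angles π/5 and 2π/5: (i) 5·cot(π/5)·cot(2π/5) = 2·(cos(π/5) + cos(2π/5)); (ii) csc(π/5)·cot(π/5) + csc(2π/5)·cot(2π/5) = 6·cot(π/5)·cot(2π/5); (iii) −csc(π/5)·cot(π/5) + csc(2π/5)·cot(2π/5) = −2. (These are the trigonometric identities used in the Spin-number and Sign-number computations in the proof of Lemma 2.10.) -/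
/-!
Write `c = cos (π / 5)`, a root of `4c² - 2c - 1`. The double-angle formula turns this relation
into `cos (2π / 5) = c - 1/2`, and squaring (both sides being positive) gives
`sin (π / 5) sin (2π / 5) = (cos (π / 5) + cos (2π / 5)) / 2`. After clearing the sines from the
denominators, each of the three identities is a polynomial consequence of these relations and
`sin² + cos² = 1`.
-/

open Real

theorem cos_two_pi_div_five_eq_cos_pi_div_five_sub_half :
    cos (2 * π / 5) = cos (π / 5) - 1 / 2 := by
  rw [show 2 * π / 5 = 2 * (π / 5) by ring, cos_two_mul]
  linear_combination quadratic_root_cos_pi_div_five / 2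

theorem sin_pi_div_five_mul_sin_two_pi_div_five :
    sin (π / 5) * sin (2 * π / 5) = (cos (π / 5) + cos (2 * π / 5)) / 2 := by
  have hπ := pi_pos
  have hs₁ : 0 < sin (π / 5) := sin_pos_of_pos_of_lt_pi (by positivity) (by linarith)
  have hs₂ : 0 < sin (2 * π / 5) := sin_pos_of_pos_of_lt_pi (by positivity) (by linarith)
  have hc₁ : 0 < cos (π / 5) := cos_pos_of_mem_Ioo ⟨by linarith, by linarith⟩
  have hc₂ : 0 < cos (2 * π / 5) := cos_pos_of_mem_Ioo ⟨by linarith, by linarith⟩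
  refine (pow_left_inj₀ (by positivity) (by positivity) two_ne_zero).mp ?_
  rw [mul_pow, sin_sq, sin_sq, cos_two_pi_div_five_eq_cos_pi_div_five_sub_half]
  linear_combination
    (cos (π / 5) ^ 2 / 4 - cos (π / 5) / 8 - 11 / 16) * quadratic_root_cos_pi_div_five

/-- Trigonometric identities for the angles `π/5` and `2π/5` used in the
Spin-number and Sign-number computations in the proof of Lemma 2.10 (here
`csc x = (sin x)⁻¹` and `cot x = cos x / sin x`):
(i) `5·cot(π/5)·cot(2π/5) = 2·(cos(π/5) + cos(2π/5))`;
(ii) `csc(π/5)·cot(π/5) + csc(2π/5)·cot(2π/5) = 6·cot(π/5)·cot(2π/5)`;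
(iii) `−csc(π/5)·cot(π/5) + csc(2π/5)·cot(2π/5) = −2`. -/
theorem stmt17 :
    5 * (cos (π / 5) / sin (π / 5)) * (cos (2 * π / 5) / sin (2 * π / 5)) =
      2 * (cos (π / 5) + cos (2 * π / 5)) ∧
    (sin (π / 5))⁻¹ * (cos (π / 5) / sin (π / 5)) +
        (sin (2 * π / 5))⁻¹ * (cos (2 * π / 5) / sin (2 * π / 5)) =
      6 * (cos (π / 5) / sin (π / 5)) * (cos (2 * π / 5) / sin (2 * π / 5)) ∧
    -((sin (π / 5))⁻¹ * (cos (π / 5) / sin (π / 5))) +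
        (sin (2 * π / 5))⁻¹ * (cos (2 * π / 5) / sin (2 * π / 5)) = -2 := by
  have hπ := pi_pos
  have hs₁ : sin (π / 5) ≠ 0 := (sin_pos_of_pos_of_lt_pi (by positivity) (by linarith)).ne'
  have hs₂ : sin (2 * π / 5) ≠ 0 := (sin_pos_of_pos_of_lt_pi (by positivity) (by linarith)).ne'
  have hc := cos_two_pi_div_five_eq_cos_pi_div_five_sub_half
  have hs := sin_pi_div_five_mul_sin_two_pi_div_five
  have hq := quadratic_root_cos_pi_div_five
  have h₁ := sin_sq_add_cos_sq (π / 5)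
  have h₂ := sin_sq_add_cos_sq (2 * π / 5)
  refine ⟨?_, ?_, ?_⟩ <;> grind
end
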